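/- Let n ≥ 1 be an integer and t > 0. For every real λ > 0 and every (z,w) ∈ ℂ^{2n}, the function η ↦ e^{2λη} W_t^+(z,w,iη) is absolutely integrable on ℝ and W_t^λ(z,w) = e^{-2tλ²} ∫_ℝ e^{2λη} W_t^+(z,w,iη) dη, where W_t^λ is the positive λ-twisted weight function. -/

import Mathlib

open MeasureTheory Complex Filter Topology

noncomputable section

/-- The weight function with complex parameter `μ` (for `Re μ ≠ 0`):
`W_t^μ(x+iy, u+iv) = 4^n exp(μ(u·y - v·x)) (4π)^{-n} (μ/sinh(2tμ))^n
  exp(-μ·coth(2tμ)·(|y|²+|v|²))`. -/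
def WtC (n : ℕ) (t : ℝ) (mu : ℂ) (z w : Fin n → ℂ) : ℂ :=
  4 ^ n *
    Complex.exp (mu * ((((∑ j, (w j).re * (z j).im) - ∑ j, (w j).im * (z j).re : ℝ)) : ℂ)) *
    (((4 * Real.pi) ^ n)⁻¹ : ℝ) * (mu / Complex.sinh (2 * t * mu)) ^ n *
    Complex.exp (-(mu * (Complex.cosh (2 * t * mu) / Complex.sinh (2 * t * mu))) *
      (((∑ j, (z j).im ^ 2) + ∑ j, (w j).im ^ 2 : ℝ) : ℂ))

/-- The partial weight function `W_t^+`, defined with the choice `λ = 1 > 0`: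
`W_t^+(z,w,ζ) = (2π)^{-1} ∫_ℝ exp(2t(λ+is/2)²) exp(-2η(λ+is/2)) W_t^{λ+is/2}(z,w) ds`,
with `η = Im ζ` (the value is independent of the choice of `λ > 0`). -/
def Wplus (n : ℕ) (t : ℝ) (z w : Fin n → ℂ) (ζ : ℂ) : ℂ :=
  ((2 * Real.pi)⁻¹ : ℝ) *
    ∫ s : ℝ,
      Complex.exp (2 * t * ((1 : ℂ) + Complex.I * s / 2) ^ 2) *
        Complex.exp (-2 * (ζ.im : ℂ) * ((1 : ℂ) + Complex.I * s / 2)) *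
        WtC n t ((1 : ℂ) + Complex.I * s / 2) z w

/-!
Put `F(μ) = exp(2tμ²) W_t^μ(z,w)`: it is holomorphic on `Re μ > 0` and on every vertical strip
`|F(x+iy)| ≤ C exp(-t y²)`, because `W_t^μ` grows at most exponentially in `Im μ` there. After
`s = 2y`, `W_t^+(z,w,iη)` is `π⁻¹ ∫ exp(-2ημ) F(μ) dy` along `Re μ = 1`, and Cauchy's theorem moves
the line to `Re μ = λ`, where `exp(2λη) W_t^+(z,w,iη) = π⁻¹ 𝓕g(η/π)` with `g(y) = F(λ+iy)`.
Moving the line to `Re μ = 2λ` or `λ/2` shows that `𝓕g` decays exponentially, so Fourier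
inversion at `0` gives `∫ exp(2λη) W_t^+(z,w,iη) dη = g(0) = exp(2tλ²) W_t^λ(z,w)`.
-/

open scoped Real FourierTransform

lemma Complex.sinh_re_le_norm_sinh (ζ : ℂ) : Real.sinh ζ.re ≤ ‖sinh ζ‖ := by
  have h := norm_sub_norm_le (cexp ζ) (cexp (-ζ))
  rw [norm_exp, norm_exp, neg_re] at h
  rw [Real.sinh_eq, sinh, norm_div, RCLike.norm_ofNat]
  linarith

lemma Complex.norm_cosh_le_cosh_re (ζ : ℂ) : ‖cosh ζ‖ ≤ Real.cosh ζ.re := by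
  have h := norm_add_le (cexp ζ) (cexp (-ζ))
  rw [norm_exp, norm_exp, neg_re] at h
  rw [Real.cosh_eq, cosh, norm_div, RCLike.norm_ofNat]
  linarith

section VerticalLines

variable {f : ℂ → ℂ} {k C a b : ℝ}

lemma integrable_vertical_line_of_norm_le (hk : 0 < k) {x : ℝ}
    (hf : ∀ y : ℝ, ContinuousAt f (x + y * I))
    (hB : ∀ y : ℝ, ‖f (x + y * I)‖ ≤ C * rexp (-k * y ^ 2)) :
    Integrable fun y : ℝ => f (x + y * I) := by
  have hcont : Continuous fun y : ℝ => f (x + y * I) :=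
    continuous_iff_continuousAt.2 fun y => (hf y).comp_of_eq (by fun_prop) rfl
  exact ((integrable_exp_neg_mul_sq hk).const_mul C).mono' hcont.aestronglyMeasurable
    (.of_forall hB)

lemma tendsto_integral_horizontal_segment (hk : 0 < k) (hab : a ≤ b)
    (hB : ∀ μ : ℂ, μ.re ∈ Set.Icc a b → ‖f μ‖ ≤ C * rexp (-k * μ.im ^ 2)) :
    Tendsto (fun T : ℝ => ∫ x : ℝ in a..b, f (x + T * I)) (cocompact ℝ) (𝓝 0) := by
  have hbound : ∀ T : ℝ, ‖∫ x : ℝ in a..b, f (x + T * I)‖ ≤ C * rexp (-k * T ^ 2) * |b - a| :=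
    fun T => intervalIntegral.norm_integral_le_of_norm_le_const fun x hx => by
      simpa using hB (x + T * I) (by simpa using (Set.uIcc_of_le hab).le (Set.uIoc_subset_uIcc hx))
  refine squeeze_zero_norm hbound ?_
  have hsq : Tendsto (fun T : ℝ => -k * T ^ 2) (cocompact ℝ) atBot :=
    ((tendsto_pow_atTop two_ne_zero).comp tendsto_norm_cocompact_atTop).const_mul_atTop_of_neg
      (neg_lt_zero.2 hk) |>.congr fun T => by simp [sq_abs]
  simpa using ((Real.tendsto_exp_atBot.comp hsq).const_mul C).mul_const |b - a|

theorem integral_vertical_line_eq_of_differentiableAt (hk : 0 < k) (hab : a ≤ b)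
    (hd : ∀ μ : ℂ, μ.re ∈ Set.Icc a b → DifferentiableAt ℂ f μ)
    (hB : ∀ μ : ℂ, μ.re ∈ Set.Icc a b → ‖f μ‖ ≤ C * rexp (-k * μ.im ^ 2)) :
    ∫ y : ℝ, f (a + y * I) = ∫ y : ℝ, f (b + y * I) := by
  have hline : ∀ x ∈ Set.Icc a b, Integrable fun y : ℝ => f (x + y * I) := fun x hx =>
    integrable_vertical_line_of_norm_le hk (fun y => (hd _ (by simpa using hx)).continuousAt)
      (fun y => by simpa using hB (x + y * I) (by simpa using hx))
  have hvert : ∀ x ∈ Set.Icc a b, Tendsto (fun T : ℝ => ∫ y : ℝ in -T..T, f (x + y * I)) atTop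
      (𝓝 (∫ y : ℝ, f (x + y * I))) := fun x hx =>
    intervalIntegral_tendsto_integral (hline x hx) tendsto_neg_atTop_atBot tendsto_id
  have hhor := tendsto_integral_horizontal_segment hk hab hB
  have hrect : ∀ T : ℝ, (∫ x : ℝ in a..b, f (x + (-T : ℝ) * I)) - (∫ x : ℝ in a..b, f (x + T * I))
      + I • (∫ y : ℝ in -T..T, f (b + y * I)) - I • (∫ y : ℝ in -T..T, f (a + y * I)) = 0 := by
    intro T
    simpa using integral_boundary_rect_eq_zero_of_differentiableOn f ⟨a, -T⟩ ⟨b, T⟩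
      fun μ hμ => (hd μ (Set.uIcc_of_le hab ▸ (mem_reProdIm.1 hμ).1)).differentiableWithinAt
  have hlim := ((((hhor.comp (tendsto_neg_atTop_atBot.mono_right atBot_le_cocompact))).sub
    (hhor.comp (atTop_le_cocompact (α := ℝ)))).add
    ((hvert b ⟨hab, le_rfl⟩).const_smul I)).sub ((hvert a ⟨le_rfl, hab⟩).const_smul I)
  have h0 := tendsto_nhds_unique hlim
    (by simp only [Function.comp_def, hrect]; exact tendsto_const_nhds)
  simp only [sub_zero, zero_add, smul_eq_mul, sub_eq_zero] at h0
  exact (mul_left_cancel₀ I_ne_zero h0).symm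

end VerticalLines

def GaussianDecayOnStrips (k : ℝ) (F : ℂ → ℂ) : Prop :=
  ∀ a b : ℝ, 0 < a → ∃ C : ℝ, ∀ μ : ℂ, μ.re ∈ Set.Icc a b → ‖F μ‖ ≤ C * rexp (-k * μ.im ^ 2)

def ExpGrowthOnStrips (G : ℂ → ℂ) : Prop :=
  ∀ a b : ℝ, 0 < a → ∃ C c : ℝ, ∀ μ : ℂ, μ.re ∈ Set.Icc a b → ‖G μ‖ ≤ C * rexp (c * |μ.im|)

lemma mul_abs_le_div_add_mul_sq {k : ℝ} (hk : 0 < k) (c y : ℝ) :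
    c * |y| ≤ c ^ 2 / (4 * k) + k * y ^ 2 := by
  rw [← sq_abs y, div_add' _ _ _ (by positivity), le_div_iff₀ (by positivity)]
  nlinarith [sq_nonneg (2 * k * |y| - c)]

lemma norm_cexp_ofReal_mul_le {c b : ℝ} {μ : ℂ} (h0 : 0 ≤ μ.re) (hb : μ.re ≤ b) :
    ‖cexp (c * μ)‖ ≤ rexp (|c| * b) := by
  rw [norm_exp, re_ofReal_mul]
  exact Real.exp_le_exp.2 <|
    (mul_le_mul_of_nonneg_right (le_abs_self c) h0).trans
      (mul_le_mul_of_nonneg_left hb (abs_nonneg c))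

namespace GaussianDecayOnStrips

variable {F G : ℂ → ℂ} {k : ℝ}

lemma integrable_vertical (hk : 0 < k) (hF : ∀ μ : ℂ, 0 < μ.re → DifferentiableAt ℂ F μ)
    (h : GaussianDecayOnStrips k F) {x : ℝ} (hx : 0 < x) :
    Integrable fun y : ℝ => F (x + y * I) := by
  obtain ⟨C, hC⟩ := h x x hx
  exact integrable_vertical_line_of_norm_le hk (fun y => (hF _ (by simpa using hx)).continuousAt)
    fun y => by simpa using hC (x + y * I) (by simp)

lemma integral_vertical_eq (hk : 0 < k) (hF : ∀ μ : ℂ, 0 < μ.re → DifferentiableAt ℂ F μ)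
    (h : GaussianDecayOnStrips k F) {a b : ℝ} (ha : 0 < a) (hb : 0 < b) :
    ∫ y : ℝ, F (a + y * I) = ∫ y : ℝ, F (b + y * I) := by
  wlog hab : a ≤ b
  · exact (this hk hF h hb ha (le_of_not_ge hab)).symm
  obtain ⟨C, hC⟩ := h a b ha
  exact integral_vertical_line_eq_of_differentiableAt hk hab
    (fun μ hμ => hF μ (ha.trans_le hμ.1)) hC

lemma cexp_ofReal_mul (h : GaussianDecayOnStrips k F) (c : ℝ) :
    GaussianDecayOnStrips k fun μ => cexp (c * μ) * F μ := by
  intro a b ha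
  obtain ⟨C, hC⟩ := h a b ha
  refine ⟨rexp (|c| * b) * C, fun μ hμ => ?_⟩
  rw [norm_mul, mul_assoc]
  exact mul_le_mul (norm_cexp_ofReal_mul_le (ha.le.trans hμ.1) hμ.2) (hC μ hμ) (norm_nonneg _)
    (Real.exp_pos _).le

lemma of_expGrowthOnStrips (hk : 0 < k) (hG : ExpGrowthOnStrips G) :
    GaussianDecayOnStrips k fun μ => cexp (2 * k * μ ^ 2) * G μ := by
  intro a b ha
  obtain ⟨C, c, hC⟩ := hG a b ha
  refine ⟨C * rexp (2 * k * b ^ 2 + c ^ 2 / (4 * k)), fun μ hμ => ?_⟩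
  have hx : 0 < μ.re := ha.trans_le hμ.1
  have hgauss : ‖cexp (2 * k * μ ^ 2)‖ ≤ rexp (2 * k * b ^ 2 - 2 * k * μ.im ^ 2) := by
    rw [norm_exp]
    refine Real.exp_le_exp.2 ?_
    have : (2 * (k : ℂ) * μ ^ 2).re = 2 * k * (μ.re ^ 2 - μ.im ^ 2) := by
      simp [sq, mul_re]
    rw [this]
    nlinarith [pow_le_pow_left₀ hx.le hμ.2 2]
  have hGμ := hC μ hμ
  have hC0 : 0 ≤ C := nonneg_of_mul_nonneg_left ((norm_nonneg _).trans hGμ) (Real.exp_pos _)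
  have habsorb : rexp (c * |μ.im|) ≤ rexp (c ^ 2 / (4 * k) + k * μ.im ^ 2) :=
    Real.exp_le_exp.2 (mul_abs_le_div_add_mul_sq hk c μ.im)
  calc ‖cexp (2 * k * μ ^ 2) * G μ‖
      ≤ rexp (2 * k * b ^ 2 - 2 * k * μ.im ^ 2) * (C * rexp (c ^ 2 / (4 * k) + k * μ.im ^ 2)) := by
        rw [norm_mul]
        exact mul_le_mul hgauss (hGμ.trans (mul_le_mul_of_nonneg_left habsorb hC0))
          (norm_nonneg _) (Real.exp_pos _).le
    _ = C * rexp (2 * k * b ^ 2 + c ^ 2 / (4 * k)) * rexp (-k * μ.im ^ 2) := by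
        rw [mul_left_comm, ← Real.exp_add, mul_assoc C, ← Real.exp_add]
        ring_nf

end GaussianDecayOnStrips

namespace ExpGrowthOnStrips

variable {f g : ℂ → ℂ}

lemma const (w : ℂ) : ExpGrowthOnStrips fun _ => w :=
  fun _ _ _ => ⟨‖w‖, 0, fun _ _ => by simp⟩

lemma mul (hf : ExpGrowthOnStrips f) (hg : ExpGrowthOnStrips g) :
    ExpGrowthOnStrips fun μ => f μ * g μ := by
  intro a b ha
  obtain ⟨C, c, hC⟩ := hf a b ha
  obtain ⟨D, d, hD⟩ := hg a b ha
  refine ⟨C * D, c + d, fun μ hμ => ?_⟩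
  rw [norm_mul, add_mul, Real.exp_add, mul_mul_mul_comm]
  exact mul_le_mul (hC μ hμ) (hD μ hμ) (norm_nonneg _) ((norm_nonneg _).trans (hC μ hμ))

lemma pow (hf : ExpGrowthOnStrips f) (m : ℕ) : ExpGrowthOnStrips fun μ => f μ ^ m := by
  induction m with
  | zero => simpa using const 1
  | succ m ih => simpa [pow_succ] using ih.mul hf

end ExpGrowthOnStrips

lemma integrable_exp_neg_mul_abs {c : ℝ} (hc : 0 < c) :
    Integrable fun x : ℝ => rexp (-c * |x|) := by
  rw [← integrableOn_univ, ← Set.Iic_union_Ioi (a := 0)]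
  refine IntegrableOn.union
    ((integrableOn_exp_mul_Iic hc 0).congr_fun (fun x hx => ?_) measurableSet_Iic)
    ((integrableOn_exp_mul_Ioi (neg_lt_zero.2 hc) 0).congr_fun (fun x hx => ?_) measurableSet_Ioi)
  · rw [abs_of_nonpos hx, mul_neg, neg_mul, neg_neg]
  · rw [abs_of_pos hx]

lemma integral_fourier_eq_apply_zero {V E : Type*} [NormedAddCommGroup V] [InnerProductSpace ℝ V]
    [MeasurableSpace V] [BorelSpace V] [FiniteDimensional ℝ V] [NormedAddCommGroup E]
    [NormedSpace ℂ E] [CompleteSpace E] {f : V → E} (hf : Integrable f) (h𝓕f : Integrable (𝓕 f))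
    (h0 : ContinuousAt f 0) :
    ∫ v, 𝓕 f v = f 0 := by
  rw [← hf.fourierInv_fourier_eq h𝓕f h0, Real.fourierInv_eq]
  simp

lemma fourier_vertical_line (F : ℂ → ℂ) (x ξ : ℝ) :
    𝓕 (fun y : ℝ => F (x + y * I)) ξ
      = rexp (2 * π * ξ * x) * ∫ y : ℝ, cexp (↑(-2 * π * ξ) * (x + y * I)) * F (x + y * I) := by
  rw [Real.fourier_real_eq_integral_exp_smul, ← integral_const_mul]
  congr 1
  ext y
  rw [smul_eq_mul, ← mul_assoc, ofReal_exp, ← Complex.exp_add]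
  congr 2
  push_cast
  ring

namespace GaussianDecayOnStrips

variable {F : ℂ → ℂ} {k : ℝ}

lemma differentiableAt_cexp_ofReal_mul (hF : ∀ μ : ℂ, 0 < μ.re → DifferentiableAt ℂ F μ)
    (c : ℝ) (μ : ℂ) (hμ : 0 < μ.re) : DifferentiableAt ℂ (fun μ => cexp (c * μ) * F μ) μ :=
  ((differentiableAt_id.const_mul _).cexp).mul (hF μ hμ)

lemma norm_fourier_vertical_le (hk : 0 < k) (hF : ∀ μ : ℂ, 0 < μ.re → DifferentiableAt ℂ F μ)
    (h : GaussianDecayOnStrips k F) {x a : ℝ} (hx : 0 < x) (ha : 0 < a) (ξ : ℝ) :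
    ‖𝓕 (fun y : ℝ => F (x + y * I)) ξ‖
      ≤ rexp (2 * π * ξ * (x - a)) * ∫ y : ℝ, ‖F (a + y * I)‖ := by
  have hline : ∀ y : ℝ, ‖cexp (↑(-2 * π * ξ) * (a + y * I)) * F (a + y * I)‖
      = rexp (-2 * π * ξ * a) * ‖F (a + y * I)‖ := fun y => by
    rw [norm_mul, norm_exp]
    simp
  rw [fourier_vertical_line, (h.cexp_ofReal_mul _).integral_vertical_eq hk
    (differentiableAt_cexp_ofReal_mul hF _) hx ha, norm_mul, norm_real, Real.norm_of_nonneg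
    (Real.exp_pos _).le]
  calc rexp (2 * π * ξ * x) * ‖∫ y : ℝ, cexp (↑(-2 * π * ξ) * (a + y * I)) * F (a + y * I)‖
      ≤ rexp (2 * π * ξ * x) * (rexp (-2 * π * ξ * a) * ∫ y : ℝ, ‖F (a + y * I)‖) := by
        gcongr
        exact (norm_integral_le_integral_norm _).trans_eq
          ((integral_congr_ae (.of_forall hline)).trans (integral_const_mul _ _))
    _ = rexp (2 * π * ξ * (x - a)) * ∫ y : ℝ, ‖F (a + y * I)‖ := by
        rw [← mul_assoc, ← Real.exp_add]
        congr 2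
        ring

lemma integrable_fourier_vertical (hk : 0 < k) (hF : ∀ μ : ℂ, 0 < μ.re → DifferentiableAt ℂ F μ)
    (h : GaussianDecayOnStrips k F) {x : ℝ} (hx : 0 < x) :
    Integrable (𝓕 fun y : ℝ => F (x + y * I)) := by
  set M₁ := ∫ y : ℝ, ‖F ((2 * x : ℝ) + y * I)‖
  set M₂ := ∫ y : ℝ, ‖F ((x / 2 : ℝ) + y * I)‖
  have hM₁ : 0 ≤ M₁ := integral_nonneg fun _ => norm_nonneg _
  have hM₂ : 0 ≤ M₂ := integral_nonneg fun _ => norm_nonneg _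
  have hcont : Continuous (𝓕 fun y : ℝ => F (x + y * I)) :=
    VectorFourier.fourierIntegral_continuous Real.continuous_fourierChar
      (continuous_fst.inner continuous_snd) (h.integrable_vertical hk hF hx)
  refine ((integrable_exp_neg_mul_abs (by positivity : 0 < π * x)).const_mul (M₁ + M₂)).mono'
    hcont.aestronglyMeasurable (.of_forall fun ξ => ?_)
  rw [mul_comm (M₁ + M₂)]
  rcases le_total 0 ξ with hξ | hξ
  · refine (h.norm_fourier_vertical_le hk hF hx (a := 2 * x) (by positivity) ξ).trans ?_
    rw [abs_of_nonneg hξ]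
    have : 0 ≤ π * x * ξ := by positivity
    exact mul_le_mul (Real.exp_le_exp.2 (by linarith)) (by linarith) hM₁
      (Real.exp_pos _).le
  · refine (h.norm_fourier_vertical_le hk hF hx (a := x / 2) (by positivity) ξ).trans ?_
    rw [abs_of_nonpos hξ]
    exact mul_le_mul (Real.exp_le_exp.2 (by linarith)) (by linarith) hM₂
      (Real.exp_pos _).le

theorem laplace_inversion (hk : 0 < k)
    (hF : ∀ μ : ℂ, 0 < μ.re → DifferentiableAt ℂ F μ) (h : GaussianDecayOnStrips k F)
    {c lam : ℝ} (hc : 0 < c) (hlam : 0 < lam) :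
    Integrable (fun η : ℝ =>
        (rexp (2 * lam * η) : ℂ) * ∫ y : ℝ, cexp (↑(-2 * η) * (c + y * I)) * F (c + y * I)) ∧
      ∫ η : ℝ, (rexp (2 * lam * η) : ℂ) * ∫ y : ℝ, cexp (↑(-2 * η) * (c + y * I)) * F (c + y * I)
        = π * F lam := by
  set g : ℝ → ℂ := fun y => F (lam + y * I)
  have hfourier : (fun η : ℝ =>
      (rexp (2 * lam * η) : ℂ) * ∫ y : ℝ, cexp (↑(-2 * η) * (c + y * I)) * F (c + y * I))
      = fun η => 𝓕 g (η / π) := by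
    ext η
    have hπ := Real.pi_ne_zero
    rw [fourier_vertical_line, (h.cexp_ofReal_mul _).integral_vertical_eq hk
      (differentiableAt_cexp_ofReal_mul hF _) hc hlam,
      show 2 * π * (η / π) * lam = 2 * lam * η by field_simp,
      show -2 * π * (η / π) = -2 * η by field_simp]
  have h𝓕g := h.integrable_fourier_vertical hk hF hlam
  have hg0 : ContinuousAt g 0 :=
    ContinuousAt.comp (g := F) (f := fun y : ℝ => (lam : ℂ) + y * I) (x := 0)
      (hF _ (by simpa using hlam)).continuousAt (by fun_prop)
  rw [hfourier]
  refine ⟨h𝓕g.comp_div Real.pi_ne_zero, ?_⟩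
  rw [Measure.integral_comp_div, abs_of_pos Real.pi_pos,
    integral_fourier_eq_apply_zero (h.integrable_vertical hk hF hlam) h𝓕g hg0, real_smul]
  simp

end GaussianDecayOnStrips

section TwistedWeight

variable {n : ℕ} {t a b : ℝ} {μ : ℂ}

lemma norm_le_add_abs_im_of_re_mem_Icc (ha : 0 < a) (hμ : μ.re ∈ Set.Icc a b) :
    ‖μ‖ ≤ b + |μ.im| :=
  (norm_le_abs_re_add_abs_im μ).trans (by rw [abs_of_pos (ha.trans_le hμ.1)]; linarith [hμ.2])

lemma re_two_mul_ofReal_mul (t : ℝ) (μ : ℂ) : (2 * (t : ℂ) * μ).re = 2 * t * μ.re := by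
  simp [mul_re]

lemma sinh_le_norm_sinh_two_mul (ht : 0 ≤ t) (hμ : a ≤ μ.re) :
    Real.sinh (2 * t * a) ≤ ‖sinh (2 * t * μ)‖ :=
  (Real.sinh_le_sinh.2 (by rw [re_two_mul_ofReal_mul]; gcongr)).trans (sinh_re_le_norm_sinh _)

lemma norm_cosh_two_mul_le (ht : 0 ≤ t) (ha : 0 ≤ a) (hμ : μ.re ∈ Set.Icc a b) :
    ‖cosh (2 * t * μ)‖ ≤ Real.cosh (2 * t * b) := by
  refine (norm_cosh_le_cosh_re _).trans (Real.cosh_le_cosh.2 ?_)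
  rw [re_two_mul_ofReal_mul, abs_of_nonneg (by have := ha.trans hμ.1; positivity),
    abs_of_nonneg (by have := ha.trans (hμ.1.trans hμ.2); positivity)]
  gcongr
  exact hμ.2

lemma expGrowthOnStrips_cexp_mul_ofReal (A : ℝ) : ExpGrowthOnStrips fun μ => cexp (μ * A) :=
  fun _ b ha => ⟨rexp (|A| * b), 0, fun μ hμ => by
    simpa [mul_comm] using norm_cexp_ofReal_mul_le (c := A) (ha.le.trans hμ.1) hμ.2⟩

lemma expGrowthOnStrips_div_sinh (ht : 0 < t) :
    ExpGrowthOnStrips fun μ => μ / sinh (2 * t * μ) := by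
  intro a b ha
  have hs : 0 < Real.sinh (2 * t * a) := Real.sinh_pos_iff.2 (by positivity)
  refine ⟨rexp b / Real.sinh (2 * t * a), 1, fun μ hμ => ?_⟩
  rw [norm_div, one_mul, div_mul_eq_mul_div, ← Real.exp_add]
  exact div_le_div₀ (Real.exp_pos _).le ((norm_le_add_abs_im_of_re_mem_Icc ha hμ).trans
    (by linarith [Real.add_one_le_exp (b + |μ.im|)])) hs (sinh_le_norm_sinh_two_mul ht.le hμ.1)

lemma expGrowthOnStrips_cexp_neg_mul_coth (ht : 0 < t) (R : ℝ) :
    ExpGrowthOnStrips fun μ => cexp (-(μ * (cosh (2 * t * μ) / sinh (2 * t * μ))) * R) := by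
  intro a b ha
  set K := Real.cosh (2 * t * b) / Real.sinh (2 * t * a)
  have hs : 0 < Real.sinh (2 * t * a) := Real.sinh_pos_iff.2 (by positivity)
  refine ⟨rexp (K * |R| * b), K * |R|, fun μ hμ => ?_⟩
  have hcoth : ‖cosh (2 * t * μ) / sinh (2 * t * μ)‖ ≤ K := by
    rw [norm_div]
    exact div_le_div₀ (Real.cosh_pos _).le (norm_cosh_two_mul_le ht.le ha.le hμ) hs
      (sinh_le_norm_sinh_two_mul ht.le hμ.1)
  rw [norm_exp, ← Real.exp_add]
  refine Real.exp_le_exp.2 ((re_le_norm _).trans ?_)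
  rw [norm_mul, norm_neg, norm_mul, norm_real, Real.norm_eq_abs]
  have hμb := norm_le_add_abs_im_of_re_mem_Icc ha hμ
  calc ‖μ‖ * ‖cosh (2 * t * μ) / sinh (2 * t * μ)‖ * |R| ≤ (b + |μ.im|) * K * |R| :=
        mul_le_mul_of_nonneg_right (mul_le_mul hμb hcoth (norm_nonneg _)
          ((norm_nonneg _).trans hμb)) (abs_nonneg R)
    _ = K * |R| * b + K * |R| * |μ.im| := by ring

lemma expGrowthOnStrips_WtC (ht : 0 < t) (z w : Fin n → ℂ) :
    ExpGrowthOnStrips fun μ => WtC n t μ z w :=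
  ((((ExpGrowthOnStrips.const _).mul (expGrowthOnStrips_cexp_mul_ofReal _)).mul
    (ExpGrowthOnStrips.const _)).mul ((expGrowthOnStrips_div_sinh ht).pow n)).mul
    (expGrowthOnStrips_cexp_neg_mul_coth ht _)

lemma differentiableAt_WtC (ht : 0 < t) (hμ : 0 < μ.re) (z w : Fin n → ℂ) :
    DifferentiableAt ℂ (fun μ => WtC n t μ z w) μ := by
  have hsinh : sinh (2 * t * μ) ≠ 0 := by
    refine norm_pos_iff.1 (lt_of_lt_of_le ?_ (sinh_le_norm_sinh_two_mul ht.le le_rfl))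
    exact Real.sinh_pos_iff.2 (by positivity)
  have hs : DifferentiableAt ℂ (fun μ => sinh (2 * t * μ)) μ :=
    (differentiableAt_id.const_mul _).csinh
  have hc : DifferentiableAt ℂ (fun μ => cosh (2 * t * μ)) μ :=
    (differentiableAt_id.const_mul _).ccosh
  unfold WtC
  fun_prop (disch := assumption)

end TwistedWeight

lemma Wplus_ofReal_mul_I {n : ℕ} (t : ℝ) (z w : Fin n → ℂ) (η : ℝ) :
    Wplus n t z w (η * I) = (π : ℂ)⁻¹ * ∫ y : ℝ, cexp (↑(-2 * η) * (1 + y * I)) *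
      (cexp (2 * t * (1 + y * I) ^ 2) * WtC n t (1 + y * I) z w) := by
  set G : ℝ → ℂ := fun y => cexp (↑(-2 * η) * (1 + y * I)) *
    (cexp (2 * t * (1 + y * I) ^ 2) * WtC n t (1 + y * I) z w)
  have hG : ∀ s : ℝ, cexp (2 * t * (1 + I * s / 2) ^ 2) * cexp (-2 * ((η * I).im : ℂ) *
      (1 + I * s / 2)) * WtC n t (1 + I * s / 2) z w = G (s / 2) := fun s => by
    simp only [G, mul_I_im, ofReal_re]
    rw [show (1 : ℂ) + I * s / 2 = 1 + ((s / 2 : ℝ) : ℂ) * I by push_cast; ring]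
    push_cast
    ring
  rw [Wplus, integral_congr_ae (.of_forall hG), Measure.integral_comp_div G 2, real_smul]
  push_cast
  field_simp
  norm_num

theorem partial_weight_inverts_to_twisted_weight_general
    (n : ℕ) (t : ℝ) (ht : 0 < t)
    (lam : ℝ) (hlam : 0 < lam) (z w : Fin n → ℂ) :
    Integrable (fun η : ℝ =>
        ((Real.exp (2 * lam * η) : ℝ) : ℂ) * Wplus n t z w ((η : ℂ) * Complex.I)) volume ∧
      WtC n t (lam : ℂ) z w
        = ((Real.exp (-2 * t * lam ^ 2) : ℝ) : ℂ) *
            ∫ η : ℝ,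
              ((Real.exp (2 * lam * η) : ℝ) : ℂ) * Wplus n t z w ((η : ℂ) * Complex.I) := by
  set F : ℂ → ℂ := fun μ => cexp (2 * t * μ ^ 2) * WtC n t μ z w
  have hF : ∀ μ : ℂ, 0 < μ.re → DifferentiableAt ℂ F μ := fun μ hμ =>
    ((differentiableAt_id.pow 2).const_mul _).cexp.mul (differentiableAt_WtC ht hμ z w)
  have hdecay : GaussianDecayOnStrips t F :=
    .of_expGrowthOnStrips ht (expGrowthOnStrips_WtC ht z w)
  obtain ⟨hint, hval⟩ := hdecay.laplace_inversion ht hF one_pos hlam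
  simp only [ofReal_one] at hint hval
  simp_rw [Wplus_ofReal_mul_I, mul_left_comm _ (π : ℂ)⁻¹]
  refine ⟨hint.const_mul _, ?_⟩
  rw [integral_const_mul, hval, inv_mul_cancel_left₀ (ofReal_ne_zero.2 Real.pi_ne_zero),
    ← mul_assoc, ofReal_exp, ← Complex.exp_add]
  push_cast
  ring_nf
  simp

/-- For every `λ > 0` and `(z,w) ∈ ℂ^{2n}`, the function
`η ↦ e^{2λη} W_t^+(z,w,iη)` is absolutely integrable on `ℝ` and
`W_t^λ(z,w) = e^{-2tλ²} ∫_ℝ e^{2λη} W_t^+(z,w,iη) dη`, where `W_t^λ` is the (positive)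
λ-twisted weight function. -/
theorem partial_weight_inverts_to_twisted_weight
    (n : ℕ) (hn : 1 ≤ n) (t : ℝ) (ht : 0 < t)
    (lam : ℝ) (hlam : 0 < lam) (z w : Fin n → ℂ) :
    Integrable (fun η : ℝ =>
        ((Real.exp (2 * lam * η) : ℝ) : ℂ) * Wplus n t z w ((η : ℂ) * Complex.I)) volume ∧
      WtC n t (lam : ℂ) z w
        = ((Real.exp (-2 * t * lam ^ 2) : ℝ) : ℂ) *
            ∫ η : ℝ,
              ((Real.exp (2 * lam * η) : ℝ) : ℂ) * Wplus n t z w ((η : ℂ) * Complex.I) :=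
  partial_weight_inverts_to_twisted_weight_general n t ht lam hlam z w
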